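/- For t ≥ 0 define u_t : (0,1) → ℝ by u_t(x) = x log x + (1−x) log(1−x) + t|x − 1/2|, and define φ_t(ρ) = sup_{x∈(0,1)} ( ρx − u_t(x) ) for ρ ∈ ℝ. Then for every t ≥ 0 and every ρ ∈ ℝ: φ_t(ρ) = −t/2 + log(1 + e^{ρ+t}) if ρ ≤ −t; φ_t(ρ) = ρ/2 + log 2 if −t ≤ ρ ≤ t; and φ_t(ρ) = t/2 + log(1 + e^{ρ−t}) if ρ ≥ t. -/

import Mathlib

/-!
Write `H` for the binary entropy, so that `u_t(x) = -H(x) + t|x - 1/2|`. For every `c` with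
`|c| ≤ t`,
`ρx - u_t(x) = (ρ - c)x + H(x) + c/2 - (t|x - 1/2| - c(x - 1/2))`,
and the last bracket is nonnegative. By concavity of `log`, `sx + H(x) ≤ log(1 + eˢ)`, with
equality at `x = sigmoid s`, so `φ_t(ρ) = c/2 + log(1 + e^{ρ-c})` as soon as the bracket vanishes
at `x = sigmoid (ρ - c)`. The choices `c = -t`, `c = ρ` and `c = t` make it vanish in the three
regimes `ρ ≤ -t`, `|ρ| ≤ t` and `ρ ≥ t`.
-/

/-- The symplectic potential `u_t(x) = x log x + (1−x) log(1−x) + t|x − 1/2|` of the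
geodesic ray on `ℂP¹` associated to the toric test configuration given by
`f(x) = |x − 1/2|`. -/
noncomputable def sympPot (t x : ℝ) : ℝ :=
  x * Real.log x + (1 - x) * Real.log (1 - x) + t * |x - 1 / 2|

/-- The Kähler potential `φ_t(ρ) = sup_{x∈(0,1)} ( ρx − u_t(x) )` recovered from the
symplectic potential by the Legendre transform. -/
noncomputable def kahlerPot (t ρ : ℝ) : ℝ :=
  sSup ((fun x => ρ * x - sympPot t x) '' Set.Ioo (0 : ℝ) 1)

open Real Set

lemma sympPot_eq_neg_binEntropy_add (t x : ℝ) :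
    sympPot t x = -binEntropy x + t * |x - 1 / 2| := by
  simp only [sympPot, binEntropy, log_inv]
  ring

lemma mul_add_binEntropy_le_log_one_add_exp (s : ℝ) {x : ℝ} (hx₀ : 0 < x) (hx₁ : x < 1) :
    s * x + binEntropy x ≤ log (1 + exp s) := by
  have hx₁' : 0 < 1 - x := sub_pos.2 hx₁
  have jensen := strictConcaveOn_log_Ioi.concaveOn.2
    (mem_Ioi.2 (div_pos (exp_pos s) hx₀)) (mem_Ioi.2 (inv_pos.2 hx₁'))
    hx₀.le hx₁'.le (add_sub_cancel x 1)
  have hlhs : x • log (exp s / x) + (1 - x) • log (1 - x)⁻¹ = s * x + binEntropy x := by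
    simp only [smul_eq_mul, log_div (exp_pos s).ne' hx₀.ne', log_exp, binEntropy, log_inv]
    ring
  have hrhs : x • (exp s / x) + (1 - x) • (1 - x)⁻¹ = 1 + exp s := by
    rw [smul_eq_mul, smul_eq_mul, mul_div_cancel₀ _ hx₀.ne', mul_inv_cancel₀ hx₁'.ne', add_comm]
  rwa [hlhs, hrhs] at jensen

lemma log_one_add_exp_eq_add_log_one_add_exp_neg (s : ℝ) :
    log (1 + exp s) = s + log (1 + exp (-s)) := by
  have h : 1 + exp s = exp s * (1 + exp (-s)) := by
    rw [mul_add, mul_one, ← exp_add, add_neg_cancel, exp_zero, add_comm]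
  rw [h, log_mul (exp_pos s).ne' (by positivity), log_exp]

lemma mul_sigmoid_add_binEntropy_sigmoid (s : ℝ) :
    s * sigmoid s + binEntropy (sigmoid s) = log (1 + exp s) := by
  have h₁ : log (sigmoid s)⁻¹ = log (1 + exp (-s)) := by rw [sigmoid_def, inv_inv]
  have h₂ : log (1 - sigmoid s)⁻¹ = log (1 + exp s) := by
    rw [← sigmoid_neg, sigmoid_def, inv_inv, neg_neg]
  rw [binEntropy, h₁, h₂, log_one_add_exp_eq_add_log_one_add_exp_neg s]
  ring

lemma mul_sub_half_le_mul_abs {c t : ℝ} (hc : |c| ≤ t) (x : ℝ) :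
    c * (x - 1 / 2) ≤ t * |x - 1 / 2| :=
  calc c * (x - 1 / 2) ≤ |c| * |x - 1 / 2| := (le_abs_self _).trans (abs_mul _ _).le
    _ ≤ t * |x - 1 / 2| := mul_le_mul_of_nonneg_right hc (abs_nonneg _)

lemma kahlerPot_eq_of_abs_le {t ρ c : ℝ} (hc : |c| ≤ t)
    (hattained : c * (sigmoid (ρ - c) - 1 / 2) = t * |sigmoid (ρ - c) - 1 / 2|) :
    kahlerPot t ρ = c / 2 + log (1 + exp (ρ - c)) := by
  have tilt : ∀ x, ρ * x - sympPot t x = (ρ - c) * x + binEntropy x + c / 2 -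
      (t * |x - 1 / 2| - c * (x - 1 / 2)) := fun x => by
    rw [sympPot_eq_neg_binEntropy_add]
    ring
  refine IsGreatest.csSup_eq ⟨⟨sigmoid (ρ - c), ⟨sigmoid_pos _, sigmoid_lt_one _⟩, ?_⟩, ?_⟩
  · dsimp only
    rw [tilt, mul_sigmoid_add_binEntropy_sigmoid, hattained]
    ring
  · rintro _ ⟨x, ⟨hx₀, hx₁⟩, rfl⟩
    dsimp only
    rw [tilt]
    linarith [mul_add_binEntropy_le_log_one_add_exp (ρ - c) hx₀ hx₁,
      mul_sub_half_le_mul_abs hc x]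

theorem kahlerPot_piecewise_formula (t : ℝ) (ht : 0 ≤ t) (ρ : ℝ) :
    (ρ ≤ -t → kahlerPot t ρ = -t / 2 + Real.log (1 + Real.exp (ρ + t))) ∧
    (-t ≤ ρ → ρ ≤ t → kahlerPot t ρ = ρ / 2 + Real.log 2) ∧
    (t ≤ ρ → kahlerPot t ρ = t / 2 + Real.log (1 + Real.exp (ρ - t))) := by
  refine ⟨fun hρ => ?_, fun hρ₁ hρ₂ => ?_, fun hρ => ?_⟩
  · have hσ : sigmoid (ρ + t) ≤ 1 / 2 := by
      simpa using sigmoid_le (show ρ + t ≤ 0 by linarith)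
    rw [← sub_neg_eq_add ρ t] at hσ ⊢
    refine kahlerPot_eq_of_abs_le (c := -t) (by rw [abs_neg, abs_of_nonneg ht]) ?_
    rw [abs_of_nonpos (sub_nonpos.2 hσ)]
    ring
  · have h := kahlerPot_eq_of_abs_le (ρ := ρ) (abs_le.2 ⟨hρ₁, hρ₂⟩) (by simp)
    rwa [sub_self, exp_zero, one_add_one_eq_two] at h
  · have hσ : 1 / 2 ≤ sigmoid (ρ - t) := by
      simpa using sigmoid_le (show 0 ≤ ρ - t by linarith)
    refine kahlerPot_eq_of_abs_le (abs_of_nonneg ht).le ?_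
    rw [abs_of_nonneg (sub_nonneg.2 hσ)]
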